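/- arXiv:2211.05281 — 5 statements merged into one kernel-verified Lean document; each statement's English description precedes it below -/
import Mathlib

section
/- For any two functions f, f' : [n]^d → {0,1} and any ordered list S of dimensions from [d], Δ(S ∘ f, S ∘ f') ≤ Δ(f, f'), where Δ denotes the fraction of points of [n]^d on which the two functions differ. -/
open scoped Classical

noncomputable section

/-- The hypergrid `[n]^d`. -/
abbrev Grid (n d : ℕ) := Fin d → Fin n

/-- Hamming distance: the fraction of points where `f` and `g` differ. -/
def hamDist {n d : ℕ} (f g : Grid n d → Bool) : ℝ :=
  ((Finset.univ.filter (fun x : Grid n d => f x ≠ g x)).card : ℝ) / (n : ℝ) ^ d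

/-- The sort operator along dimension `i`. -/
def sortDim {n d : ℕ} (i : Fin d) (f : Grid n d → Bool) : Grid n d → Bool :=
  fun x => decide
    (n - ((Finset.univ.filter (fun c : Fin n => f (Function.update x i c) = true)).card)
      ≤ (x i : ℕ))

/-- Sorting along an ordered list of dimensions `L = (i₁, …, i_k)`:
`L ∘ f = sort_{i_k}(⋯(sort_{i₁} f)⋯)`. -/
def sortList {n d : ℕ} (L : List (Fin d)) (f : Grid n d → Bool) : Grid n d → Bool :=
  L.foldl (fun g i => sortDim i g) f

/-! A sorted line is determined by its number of ones `k`, and two sorted lines with `k ≤ k'` ones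
differ in exactly `k' - k` positions, which is at most the number of positions where the unsorted
lines differ. Since `sort_i` acts independently on the `i`-lines, which partition the grid, it
does not increase the Hamming distance, and neither does any composition of such operators. -/

open Finset

section Line

variable {α : Type*} [Fintype α] {n : ℕ}

def numOnes (h : α → Bool) : ℕ := #{a | h a = true}

lemma numOnes_le_card (h : α → Bool) : numOnes h ≤ Fintype.card α :=
  card_filter_le _ _

lemma numOnes_le_numOnes_add_hammingDist (h h' : α → Bool) :
    numOnes h' ≤ numOnes h + hammingDist h h' := by
  have hsub : univ.filter (h' · = true) \ univ.filter (h · = true) ⊆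
      univ.filter fun a => h a ≠ h' a := by
    intro a ha
    simp only [mem_sdiff, mem_filter, mem_univ, true_and] at ha
    simp [ha.1, ha.2]
  have hcard := card_le_card_sdiff_add_card
    (s := univ.filter (h' · = true)) (t := univ.filter (h · = true))
  have hdiff := card_le_card hsub
  rw [numOnes, numOnes, hammingDist]
  omega

def sortLine (h : Fin n → Bool) (c : Fin n) : Bool := decide (n - numOnes h ≤ c.val)

lemma hammingDist_sortLine_of_numOnes_le {h h' : Fin n → Bool} (hle : numOnes h ≤ numOnes h') :
    hammingDist (sortLine h) (sortLine h') = numOnes h' - numOnes h := by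
  have hk' : numOnes h' ≤ n := by simpa using numOnes_le_card h'
  have hband : ({c | sortLine h c ≠ sortLine h' c} : Finset (Fin n)) =
      ({c | c.val < n - numOnes h} : Finset (Fin n)) \
        ({c | c.val < n - numOnes h'} : Finset (Fin n)) := by
    ext c
    simp only [sortLine, ne_eq, decide_eq_decide, mem_filter, mem_sdiff, mem_univ, true_and]
    omega
  have hsub : ({c | c.val < n - numOnes h'} : Finset (Fin n)) ⊆
      ({c | c.val < n - numOnes h} : Finset (Fin n)) :=
    monotone_filter_right _ fun c hc => by omega
  rw [hammingDist, hband, card_sdiff_of_subset hsub, Fin.card_filter_val_lt, Fin.card_filter_val_lt]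
  omega

theorem hammingDist_sortLine_le (h h' : Fin n → Bool) :
    hammingDist (sortLine h) (sortLine h') ≤ hammingDist h h' := by
  rcases le_total (numOnes h) (numOnes h') with hle | hle
  · rw [hammingDist_sortLine_of_numOnes_le hle]
    have := numOnes_le_numOnes_add_hammingDist h h'
    omega
  · rw [hammingDist_comm, hammingDist_comm h, hammingDist_sortLine_of_numOnes_le hle]
    have := numOnes_le_numOnes_add_hammingDist h' h
    omega

end Line

lemma hammingDist_eq_sum_hammingDist_fiber {α β γ M : Type*} [Fintype α] [Fintype β]
    [Fintype γ] [DecidableEq M] (e : α ≃ β × γ) (F G : α → M) :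
    hammingDist F G =
      ∑ z, hammingDist (fun b => F (e.symm (b, z))) (fun b => G (e.symm (b, z))) := by
  simp only [hammingDist, card_filter]
  rw [← e.symm.sum_comp, Fintype.sum_prod_type_right]

section Grid

variable {n d : ℕ}

lemma sortDim_funSplitAt_symm (i : Fin d) (f : Grid n d → Bool) (c : Fin n)
    (y : {j // j ≠ i} → Fin n) :
    sortDim i f ((Equiv.funSplitAt i (Fin n)).symm (c, y)) =
      sortLine (fun c' => f ((Equiv.funSplitAt i (Fin n)).symm (c', y))) c := by
  have hupdate : ∀ c', Function.update ((Equiv.funSplitAt i (Fin n)).symm (c, y)) i c' =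
      (Equiv.funSplitAt i (Fin n)).symm (c', y) := by
    intro c'
    ext j
    by_cases hj : j = i
    · subst hj; simp
    · simp [hj]
  simp [sortDim, sortLine, numOnes, hupdate]

theorem hammingDist_sortDim_le (i : Fin d) (f f' : Grid n d → Bool) :
    hammingDist (sortDim i f) (sortDim i f') ≤ hammingDist f f' := by
  rw [hammingDist_eq_sum_hammingDist_fiber (Equiv.funSplitAt i (Fin n)),
    hammingDist_eq_sum_hammingDist_fiber (Equiv.funSplitAt i (Fin n)) f]
  refine sum_le_sum fun y _ => ?_
  simp only [sortDim_funSplitAt_symm]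
  exact hammingDist_sortLine_le _ _

lemma hamDist_eq_hammingDist_div (f g : Grid n d → Bool) :
    hamDist f g = hammingDist f g / (n : ℝ) ^ d :=
  rfl

theorem hammingDist_sortList_le (L : List (Fin d)) (f f' : Grid n d → Bool) :
    hammingDist (sortList L f) (sortList L f') ≤ hammingDist f f' := by
  induction L generalizing f f' with
  | nil => rfl
  | cons i L ih => exact (ih (sortDim i f) (sortDim i f')).trans (hammingDist_sortDim_le i f f')

end Grid

/-- sorting never increases the Hamming distance between two functions. -/
theorem sortList_hamDist_le {n d : ℕ} (f f' : Grid n d → Bool) (L : List (Fin d)) :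
    hamDist (sortList L f) (sortList L f') ≤ hamDist f f' := by
  rw [hamDist_eq_hammingDist_div, hamDist_eq_hammingDist_div]
  gcongr
  exact_mod_cast hammingDist_sortList_le L f f'
end
end

section
/- For every function f : [n]^d → {0,1}, δ(f) ≤ E_{S} E_{h ∼ R_S}[δ(h)] + E_{π} E_{S}[ Δ(π(S) ∘ f, π(S̄) ∘ f) ], where S is a uniformly random subset of [d], π is a uniformly random permutation of [d], π(S) denotes the elements of S listed in the order induced by π, and S̄ = [d] \ S. -/
open scoped Classical

noncomputable section

/-- `π(S)`: the elements of `S` listed in the order induced by the permutation `π`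
(namely `π 0, π 1, …`, keeping only those in `S`). -/
def permList {d : ℕ} (π : Equiv.Perm (Fin d)) (S : Finset (Fin d)) : List (Fin d) :=
  ((List.finRange d).map (fun i => π i)).filter (· ∈ S)

/-- The restriction of `f` to the coordinates in `S`, with the coordinates outside `S`
fixed according to `z` (realized as a function on the full grid that ignores the
coordinates outside `S`). -/
def restrictF {n d : ℕ} (f : Grid n d → Bool) (S : Finset (Fin d)) (z : Grid n d) :
    Grid n d → Bool :=
  fun x => f (fun j => if j ∈ S then x j else z j)

/-- `δ_S(h)`: the expected distance between `h` and the sort of `h` on the coordinates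
of `S` taken in a uniformly random order. -/
def deltaS {n d : ℕ} (S : Finset (Fin d)) (h : Grid n d → Bool) : ℝ :=
  (∑ π : Equiv.Perm (Fin d), hamDist h (sortList (permList π S) h)) /
    (Nat.factorial d : ℝ)

/-- `δ(f) = E_π[Δ(f, π([d]) ∘ f)]`. -/
def deltaF {n d : ℕ} (f : Grid n d → Bool) : ℝ :=
  deltaS Finset.univ f

/-!
Averaged over `S`, the order `π(S̄) ++ π(S)` is again a uniformly random order of `[d]`, so
`δ(f) = E_{π,S} Δ(f, π(S) ∘ π(S̄) ∘ f)`. Sorting along a list `L` is idempotent (sorting one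
dimension keeps every line in the other dimensions monotone) and `Δ`-nonexpanding (on a line,
two sorted functions with `k` and `k'` ones differ in exactly `|k - k'|` points). The triangle
inequality therefore gives
`Δ(f, π(S) ∘ π(S̄) ∘ f) ≤ Δ(f, π(S) ∘ f) + Δ(π(S) ∘ f, π(S̄) ∘ f)`, and the first term averages
to `E_{h ∼ R_S} δ(h)` because sorting along the dimensions of `S` commutes with fixing the others.
-/

open Finset Function

namespace HypergridSort

section Counting

variable {ι β : Type*} [Fintype ι] [DecidableEq ι] [Fintype β]

lemma card_mul_card_filter_eq_sum_card_filter_update (i : ι) (P : (ι → β) → Prop)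
    [DecidablePred P] :
    Fintype.card β * #{x | P x} = ∑ x, #{c | P (update x i c)} := by
  let e : (ι → β) × β → (ι → β) × β := fun p => (update p.1 i p.2, p.1 i)
  have he : Involutive e := fun p => by simp [e]
  calc Fintype.card β * #{x | P x} = ∑ q : (ι → β) × β, if P q.1 then 1 else 0 := by
        rw [Fintype.sum_prod_type, card_filter, mul_sum]; simp [apply_ite card]
    _ = ∑ p, if P (e p).1 then 1 else 0 :=
        (Equiv.sum_comp he.toPerm (fun q => if P q.1 then 1 else 0)).symm
    _ = _ := by rw [Fintype.sum_prod_type]; simp [sum_boole, e]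

lemma sum_card_filter_piecewise (S : Finset ι) (P : (ι → β) → Prop) [DecidablePred P] :
    ∑ z, #{x | P (S.piecewise x z)} = Fintype.card (ι → β) * #{x | P x} := by
  let e : (ι → β) × (ι → β) → (ι → β) × (ι → β) :=
    fun p => (S.piecewise p.1 p.2, S.piecewise p.2 p.1)
  have he : Involutive e := fun p => by
    ext j <;> by_cases hj : j ∈ S <;> simp [e, hj]
  calc ∑ z, #{x | P (S.piecewise x z)} = ∑ p, if P (e p).1 then 1 else 0 := by
        rw [Fintype.sum_prod_type, sum_comm]; simp [sum_boole, e]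
    _ = ∑ q : (ι → β) × (ι → β), if P q.1 then 1 else 0 :=
        Equiv.sum_comp he.toPerm (fun q => if P q.1 then 1 else 0)
    _ = _ := by
        rw [Fintype.sum_prod_type, card_filter, mul_sum]; simp [apply_ite card]

end Counting

variable {n d : ℕ}

def sortLine (h : Fin n → Bool) (b : Fin n) : Bool :=
  decide (n - #{c | h c = true} ≤ (b : ℕ))

lemma card_filter_le_val {m : ℕ} (hm : m ≤ n) : #{b : Fin n | m ≤ (b : ℕ)} = n - m := by
  have := card_filter_add_card_filter_not (s := univ) (fun b : Fin n => (b : ℕ) < m)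
  simp only [not_lt, card_univ, Fintype.card_fin, Fin.card_filter_val_lt] at this
  omega

lemma card_filter_val_mem_Ico_le (a c : ℕ) :
    #{b : Fin n | a ≤ (b : ℕ) ∧ (b : ℕ) < c} ≤ c - a :=
  calc _ ≤ #(Ico a c) :=
        card_le_card_of_injOn Fin.val (fun b hb => by simpa using hb) Fin.val_injective.injOn
    _ = c - a := Nat.card_Ico a c

lemma card_sortLine (h : Fin n → Bool) : #{b | sortLine h b = true} = #{b | h b = true} := by
  have hk : #{c | h c = true} ≤ n := (card_filter_le _ _).trans (by simp)
  simp only [sortLine, decide_eq_true_eq, card_filter_le_val (Nat.sub_le _ _)]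
  omega

lemma monotone_sortLine (h : Fin n → Bool) : Monotone (sortLine h) := by
  intro a b hab
  simp only [sortLine, Bool.le_iff_imp, decide_eq_true_eq]
  exact fun ha => ha.trans hab

lemma sortLine_eq_self_of_monotone {h : Fin n → Bool} (hh : Monotone h) : sortLine h = h := by
  funext b
  -- Mathlib has the statement for antitone predicates: read the line backwards.
  have hrev : #{c : Fin n | h c.rev = true} = #{c | h c = true} :=
    card_equiv Fin.revPerm (by simp)
  have := Fin.lt_card_filter_univ_iff_apply_of_imp (j := b.rev) (fun c : Fin n => h c.rev = true)
    (fun c c' hc' => Bool.le_iff_imp.mp (hh (Fin.rev_le_rev.mpr hc')))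
  simp only [Fin.rev_rev, hrev, Fin.val_rev] at this
  rw [sortLine, Bool.eq_iff_iff, decide_eq_true_eq, ← this]
  omega

lemma card_filter_le_card_filter_add_card_filter_ne (h h' : Fin n → Bool) :
    #{b | h b = true} ≤ #{b | h' b = true} + #{b | h b ≠ h' b} :=
  (card_le_card fun b => by by_cases h' b = true <;> simp_all).trans (card_union_le _ _)

lemma card_sortLine_ne_le (h h' : Fin n → Bool) :
    #{b | sortLine h b ≠ sortLine h' b} ≤ #{b | h b ≠ h' b} := by
  have hle := card_filter_le_card_filter_add_card_filter_ne h h'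
  have hge := card_filter_le_card_filter_add_card_filter_ne h' h
  simp only [ne_comm (a := h' _)] at hge
  set k := #{c | h c = true}
  set k' := #{c | h' c = true}
  -- the sorted lines differ exactly at the heights between `n - k` and `n - k'`
  calc _ ≤ #{b : Fin n | min (n - k) (n - k') ≤ (b : ℕ) ∧ (b : ℕ) < max (n - k) (n - k')} :=
        card_le_card fun b => by simp [sortLine]; omega
    _ ≤ _ := card_filter_val_mem_Ico_le _ _
    _ ≤ _ := by omega

lemma sortDim_apply (i : Fin d) (f : Grid n d → Bool) (x : Grid n d) :
    sortDim i f x = sortLine (fun c => f (update x i c)) (x i) := rfl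

lemma sortDim_apply_update (i : Fin d) (f : Grid n d → Bool) (x : Grid n d) (c : Fin n) :
    sortDim i f (update x i c) = sortLine (fun b => f (update x i b)) c := by
  simp [sortDim_apply]

lemma card_sortDim_ne_le (i : Fin d) (u v : Grid n d → Bool) :
    #{x | sortDim i u x ≠ sortDim i v x} ≤ #{x | u x ≠ v x} := by
  rcases Nat.eq_zero_or_pos n with rfl | hn
  · have : IsEmpty (Grid 0 d) := ⟨fun x => (x i).elim0⟩
    simp
  refine Nat.le_of_mul_le_mul_left ?_ (Fintype.card_fin n ▸ hn)
  simp only [card_mul_card_filter_eq_sum_card_filter_update i, sortDim_apply_update]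
  exact sum_le_sum fun x _ => card_sortLine_ne_le _ _

def MonotoneAlong (i : Fin d) (g : Grid n d → Bool) : Prop :=
  ∀ x, Monotone fun c => g (update x i c)

lemma monotoneAlong_sortDim (i : Fin d) (f : Grid n d → Bool) :
    MonotoneAlong i (sortDim i f) := fun x => by
  simpa only [sortDim_apply_update] using monotone_sortLine _

lemma MonotoneAlong.sortDim_eq {i : Fin d} {g : Grid n d → Bool} (h : MonotoneAlong i g) :
    sortDim i g = g := by
  funext x
  rw [sortDim_apply, sortLine_eq_self_of_monotone (h x)]
  simp

lemma MonotoneAlong.sortDim_of_ne {i j : Fin d} {g : Grid n d → Bool} (h : MonotoneAlong i g)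
    (hij : i ≠ j) : MonotoneAlong i (sortDim j g) := by
  intro x c c' hcc
  have hcard : #{b | g (update (update x j b) i c) = true}
      ≤ #{b | g (update (update x j b) i c') = true} :=
    card_le_card fun b => by
      simpa using fun hb => Bool.le_iff_imp.mp (h (update x j b) hcc) hb
  simp only [sortDim_apply, sortLine, update_of_ne hij.symm, update_comm hij, Bool.le_iff_imp,
    decide_eq_true_eq]
  omega

lemma sortList_cons (i : Fin d) (L : List (Fin d)) (f : Grid n d → Bool) :
    sortList (i :: L) f = sortList L (sortDim i f) := rfl

lemma sortList_append (L L' : List (Fin d)) (f : Grid n d → Bool) :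
    sortList (L ++ L') f = sortList L' (sortList L f) :=
  List.foldl_append ..

lemma MonotoneAlong.sortList {i : Fin d} {g : Grid n d → Bool} (h : MonotoneAlong i g)
    (L : List (Fin d)) : MonotoneAlong i (sortList L g) := by
  induction L generalizing g with
  | nil => exact h
  | cons j L ih =>
    rw [sortList_cons]
    rcases eq_or_ne i j with rfl | hij
    · exact ih (h.sortDim_eq.symm ▸ h)
    · exact ih (h.sortDim_of_ne hij)

lemma monotoneAlong_sortList {i : Fin d} {L : List (Fin d)} (hi : i ∈ L)
    (f : Grid n d → Bool) : MonotoneAlong i (sortList L f) := by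
  induction L generalizing f with
  | nil => cases hi
  | cons j L ih =>
    rw [sortList_cons]
    rcases List.mem_cons.mp hi with rfl | hiL
    · exact (monotoneAlong_sortDim i f).sortList L
    · exact ih hiL _

lemma sortList_eq_self {L : List (Fin d)} {g : Grid n d → Bool}
    (h : ∀ i ∈ L, MonotoneAlong i g) : sortList L g = g := by
  induction L with
  | nil => rfl
  | cons j L ih =>
    rw [sortList_cons, (h j List.mem_cons_self).sortDim_eq]
    exact ih fun i hi => h i (List.mem_cons_of_mem j hi)

lemma sortList_sortList (L : List (Fin d)) (f : Grid n d → Bool) :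
    sortList L (sortList L f) = sortList L f :=
  sortList_eq_self fun _ hi => monotoneAlong_sortList hi f

lemma card_sortList_ne_le (L : List (Fin d)) (u v : Grid n d → Bool) :
    #{x | sortList L u x ≠ sortList L v x} ≤ #{x | u x ≠ v x} := by
  induction L generalizing u v with
  | nil => exact le_rfl
  | cons i L ih => exact (ih _ _).trans (card_sortDim_ne_le i u v)

lemma hamDist_sortList_le (L : List (Fin d)) (u v : Grid n d → Bool) :
    hamDist (sortList L u) (sortList L v) ≤ hamDist u v := by
  unfold hamDist
  gcongr ?_ / _
  exact_mod_cast card_sortList_ne_le L u v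

lemma hamDist_triangle (u v w : Grid n d → Bool) :
    hamDist u w ≤ hamDist u v + hamDist v w := by
  unfold hamDist
  rw [← add_div]
  gcongr
  exact_mod_cast (card_le_card fun x => by by_cases u x = v x <;> simp_all).trans
    (card_union_le _ _)

lemma hamDist_sortList_append_le (L L' : List (Fin d)) (f : Grid n d → Bool) :
    hamDist f (sortList (L' ++ L) f)
      ≤ hamDist f (sortList L f) + hamDist (sortList L f) (sortList L' f) := by
  rw [sortList_append]
  calc _ ≤ hamDist f (sortList L f) + hamDist (sortList L f) (sortList L (sortList L' f)) :=
        hamDist_triangle _ _ _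
    _ ≤ _ := by
        grw [← hamDist_sortList_le L (sortList L f) (sortList L' f), sortList_sortList]

lemma restrictF_apply (f : Grid n d → Bool) (S : Finset (Fin d)) (z x : Grid n d) :
    restrictF f S z x = f (S.piecewise x z) := rfl

lemma sortDim_restrictF {S : Finset (Fin d)} {i : Fin d} (hi : i ∈ S) (g : Grid n d → Bool)
    (z : Grid n d) : sortDim i (restrictF g S z) = restrictF (sortDim i g) S z := by
  funext x
  simp only [sortDim_apply, restrictF_apply, piecewise_eq_of_mem _ _ _ hi,
    ← update_piecewise_of_mem _ _ _ hi]

lemma sortList_restrictF {S : Finset (Fin d)} {L : List (Fin d)} (hL : ∀ i ∈ L, i ∈ S)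
    (g : Grid n d → Bool) (z : Grid n d) :
    sortList L (restrictF g S z) = restrictF (sortList L g) S z := by
  induction L generalizing g with
  | nil => rfl
  | cons j L ih =>
    rw [sortList_cons, sortList_cons, sortDim_restrictF (hL j List.mem_cons_self)]
    exact ih (fun i hi => hL i (List.mem_cons_of_mem j hi)) _

lemma sum_hamDist_restrictF_div (S : Finset (Fin d)) (u v : Grid n d → Bool) :
    (∑ z, hamDist (restrictF u S z) (restrictF v S z)) / (n : ℝ) ^ d = hamDist u v := by
  simp only [hamDist, ← sum_div]
  rw [← Nat.cast_sum, show ∑ z, #{x | restrictF u S z x ≠ restrictF v S z x} = _ from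
    sum_card_filter_piecewise S fun x => u x ≠ v x]
  by_cases hN : (n : ℝ) ^ d = 0
  · simp [hN]
  · simp only [Fintype.card_fun, Fintype.card_fin]
    push_cast
    field_simp

lemma mem_permList {π : Equiv.Perm (Fin d)} {S : Finset (Fin d)} {i : Fin d} :
    i ∈ permList π S ↔ i ∈ S := by
  simpa [permList] using fun _ => π.surjective i

lemma sum_deltaS_restrictF_div (S : Finset (Fin d)) (f : Grid n d → Bool) :
    (∑ z, deltaS S (restrictF f S z)) / (n : ℝ) ^ d
      = (∑ π, hamDist f (sortList (permList π S) f)) / (Nat.factorial d : ℝ) := by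
  simp only [deltaS, sortList_restrictF (fun _ hi => mem_permList.mp hi)]
  rw [← sum_div, sum_comm, div_right_comm, sum_div]
  simp only [sum_hamDist_restrictF_div]

lemma nodup_permList (π : Equiv.Perm (Fin d)) (S : Finset (Fin d)) : (permList π S).Nodup :=
  ((List.nodup_finRange d).map π.injective).filter _

lemma permList_univ (π : Equiv.Perm (Fin d)) : permList π univ = (List.finRange d).map π := by
  simp [permList]

lemma permList_map (π : Equiv.Perm (Fin d)) (Q : Finset (Fin d)) :
    permList π (Q.map π.toEmbedding) = (permList 1 Q).map π := by
  simp [permList, List.filter_map, Function.comp_def, mem_map_equiv]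

lemma exists_perm_map_finRange_eq {l : List (Fin d)} (hnd : l.Nodup) (hl : ∀ x, x ∈ l) :
    ∃ σ : Equiv.Perm (Fin d), (List.finRange d).map σ = l := by
  let e := hnd.getEquivOfForallMemList l hl
  have hlen : l.length = d := by simpa using Fintype.card_congr e
  refine ⟨(finCongr hlen.symm).trans e, List.ext_get (by simp [hlen]) fun k _ _ => ?_⟩
  simp [e]

lemma sum_sum_permList_compl_append {M : Type*} [AddCommMonoid M] (F : List (Fin d) → M) :
    ∑ π : Equiv.Perm (Fin d), ∑ S, F (permList π Sᶜ ++ permList π S)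
      = 2 ^ d • ∑ π, F (permList π univ) := by
  have hσ (Q : Finset (Fin d)) : ∃ σ : Equiv.Perm (Fin d),
      (List.finRange d).map σ = permList 1 Qᶜ ++ permList 1 Q :=
    exists_perm_map_finRange_eq
      ((nodup_permList 1 Qᶜ).append (nodup_permList 1 Q) (by simp [List.Disjoint, mem_permList]))
      (fun x => by by_cases x ∈ Q <;> simp [mem_permList, *])
  choose σ hσ using hσ
  -- substituting `S = π Q` turns `π(Sᶜ) ++ π(S)` into the order `π ∘ σ Q`
  calc ∑ π, ∑ S, F (permList π Sᶜ ++ permList π S)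
      = ∑ π, ∑ Q, F ((List.finRange d).map ⇑(π * σ Q)) := by
        refine sum_congr rfl fun π _ => ?_
        rw [← (Equiv.finsetCongr π).sum_comp]
        refine sum_congr rfl fun Q _ => ?_
        have hcompl : (Q.map π.toEmbedding)ᶜ = Qᶜ.map π.toEmbedding := by
          ext; simp [mem_map_equiv]
        rw [Equiv.finsetCongr_apply, hcompl, permList_map, permList_map, ← List.map_append,
          ← hσ, List.map_map, Equiv.Perm.coe_mul]
    _ = ∑ Q, ∑ π, F (permList (π * σ Q) univ) := by rw [sum_comm]; simp only [permList_univ]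
    _ = ∑ _Q : Finset (Fin d), ∑ π, F (permList π univ) :=
        sum_congr rfl fun Q _ =>
          Equiv.sum_comp (Equiv.mulRight (σ Q)) (fun π => F (permList π univ))
    _ = 2 ^ d • ∑ π, F (permList π univ) := by simp

end HypergridSort

open HypergridSort in
/-- `δ(f) ≤ E_S E_{h ∼ R_S}[δ(h)] + E_π E_S[Δ(π(S) ∘ f, π(S̄) ∘ f)]`,
where `S` is a uniformly random subset of `[d]`, `R_S` fixes the coordinates outside
`S` uniformly at random, and `π` is a uniformly random permutation of `[d]`. -/
theorem delta_triangle_restriction {n d : ℕ} (f : Grid n d → Bool) :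
    deltaF f ≤
      (∑ S : Finset (Fin d),
          (∑ z : Grid n d, deltaS S (restrictF f S z)) / (n : ℝ) ^ d) / 2 ^ d +
      (∑ π : Equiv.Perm (Fin d),
          (∑ S : Finset (Fin d),
            hamDist (sortList (permList π S) f) (sortList (permList π Sᶜ) f)) / 2 ^ d) /
        (Nat.factorial d : ℝ) := by
  calc deltaF f
      = (∑ π : Equiv.Perm (Fin d), ∑ S,
          hamDist f (sortList (permList π Sᶜ ++ permList π S) f)) / 2 ^ d /
            (Nat.factorial d : ℝ) := by
        rw [sum_sum_permList_compl_append fun L => hamDist f (sortList L f), nsmul_eq_mul,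
          deltaF, deltaS]
        push_cast
        field_simp
    _ ≤ (∑ π : Equiv.Perm (Fin d), ∑ S, (hamDist f (sortList (permList π S) f)
          + hamDist (sortList (permList π S) f) (sortList (permList π Sᶜ) f))) / 2 ^ d /
            (Nat.factorial d : ℝ) := by
        gcongr with π _ S _
        exact hamDist_sortList_append_le _ _ f
    _ = _ := by
        simp only [sum_deltaS_restrictF_div, sum_add_distrib, ← sum_div]
        rw [sum_comm (γ := Finset (Fin d))]
        ring
end
end

section
/- Let f : [n]^d → {0,1}, let χ be a coloring of the edges of the fully augmented hypergrid, and let p ∈ (0,1). Let H(p) be the distribution on subsets of [d] where each element is included independently with probability p. Then T_{Φ_χ}(f) ≥ (1/√p) · E_{S ∼ H(p)} E_{h ∼ R_S}[ T_{Φ_χ}(h) ], where restrictions h inherit the coloring χ on their edges. -/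
/-!
Fix a point `w` and let `A` be the set of directions `i` with `Φ(w; i) = 1`. The restricted
influence at `w` is `|S ∩ A|`, whose mean over `S ∼ H(p)` is `p |A|`, so Jensen's inequality
for the concave square root gives `E_S √|S ∩ A| ≤ √p · √|A|`. Averaging over `w` yields the
theorem, because the point assembled from a uniform setting `z` outside `S` and a uniform point
`x` of the subgrid is uniform: `(z, x) ↦ (embedPt S x z, embedPt S z x)` is an involution.
-/

open scoped Classical

noncomputable section

def IsViol {n d : ℕ} (f : Grid n d → Bool) (i : Fin d) (u v : Grid n d) : Prop :=
  (∀ j, j ≠ i → u j = v j) ∧ u i < v i ∧ f u = true ∧ f v = false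

def thrInfCsub {n d : ℕ} (f : Grid n d → Bool) (χ : Grid n d → Grid n d → Bool)
    (S : Finset (Fin d)) (w : Grid n d) : ℕ :=
  (S.filter (fun i : Fin d =>
    ∃ y : Grid n d, (IsViol f i w y ∧ χ w y = f w) ∨ (IsViol f i y w ∧ χ y w = f w))).card

def thrInfC {n d : ℕ} (f : Grid n d → Bool) (χ : Grid n d → Grid n d → Bool)
    (x : Grid n d) : ℕ :=
  thrInfCsub f χ Finset.univ x

def embedPt {n d : ℕ} (S : Finset (Fin d)) (z x : Grid n d) : Grid n d :=
  fun j => if j ∈ S then x j else z j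

open Finset

section BiasedSubsets

variable {ι R : Type*} [Fintype ι] [CommRing R]

theorem Fintype.sum_pow_card_mul_one_sub_pow (p : R) :
    ∑ S : Finset ι, p ^ #S * (1 - p) ^ (Fintype.card ι - #S) = 1 := by
  simp [Fintype.sum_pow_mul_eq_add_pow]

theorem Fintype.sum_pow_card_mul_one_sub_pow_of_mem (p : R) (i : ι) :
    ∑ S : Finset ι with i ∈ S, p ^ #S * (1 - p) ^ (Fintype.card ι - #S) = p := by
  set s := univ.erase i
  have hi : i ∉ s := notMem_erase i univ
  have hcard : Fintype.card ι = #s + 1 := by rw [card_erase_add_one (mem_univ i), card_univ]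
  have hnot : ∀ T ∈ s.powerset, i ∉ T := fun T hT h => hi (mem_powerset.1 hT h)
  calc ∑ S : Finset ι with i ∈ S, p ^ #S * (1 - p) ^ (Fintype.card ι - #S)
      = ∑ T ∈ s.powerset, p ^ #(insert i T) * (1 - p) ^ (Fintype.card ι - #(insert i T)) := by
        rw [sum_filter, ← powerset_univ, ← insert_erase (mem_univ i), sum_powerset_insert hi,
          Finset.sum_eq_zero fun T hT => if_neg (hnot T hT), zero_add]
        exact Finset.sum_congr rfl fun T _ => if_pos (mem_insert_self i T)
    _ = p * ∑ T ∈ s.powerset, p ^ #T * (1 - p) ^ (#s - #T) := by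
        rw [mul_sum]
        refine Finset.sum_congr rfl fun T hT => ?_
        rw [card_insert_of_notMem (hnot T hT), hcard, Nat.add_sub_add_right]
        ring
    _ = p := by rw [Finset.sum_pow_mul_eq_add_pow, add_sub_cancel, one_pow, mul_one]

theorem Fintype.sum_pow_card_mul_one_sub_pow_mul_card_filter (p : R) (P : ι → Prop)
    [DecidablePred P] :
    ∑ S : Finset ι, p ^ #S * (1 - p) ^ (Fintype.card ι - #S) * #(S.filter P) =
      p * #(univ.filter P) := by
  have hcard : ∀ S : Finset ι, (#(S.filter P) : R) = ∑ i with P i, if i ∈ S then 1 else 0 := by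
    intro S
    rw [sum_boole, filter_filter]
    congr 2; ext i; simp [and_comm]
  simp_rw [hcard, mul_sum, mul_boole]
  rw [sum_comm]
  simp_rw [← sum_filter, Fintype.sum_pow_card_mul_one_sub_pow_of_mem]
  simp [mul_comm]

theorem Fintype.sum_pow_card_mul_one_sub_pow_mul_sqrt_card_filter_le {p : ℝ} (hp0 : 0 ≤ p)
    (hp1 : p ≤ 1) (P : ι → Prop) [DecidablePred P] :
    ∑ S : Finset ι, p ^ #S * (1 - p) ^ (Fintype.card ι - #S) * √(#(S.filter P) : ℝ) ≤
      √p * √(#(univ.filter P) : ℝ) := by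
  have hw : ∀ S ∈ (univ : Finset (Finset ι)), 0 ≤ p ^ #S * (1 - p) ^ (Fintype.card ι - #S) :=
    fun S _ => by have := sub_nonneg.2 hp1; positivity
  calc ∑ S : Finset ι, p ^ #S * (1 - p) ^ (Fintype.card ι - #S) * √(#(S.filter P) : ℝ)
      ≤ √(∑ S : Finset ι, p ^ #S * (1 - p) ^ (Fintype.card ι - #S) * #(S.filter P)) :=
        Real.strictConcaveOn_sqrt.concaveOn.le_map_sum hw (sum_pow_card_mul_one_sub_pow p)
          fun S _ => Set.mem_Ici.2 (Nat.cast_nonneg _)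
    _ = √p * √(#(univ.filter P) : ℝ) := by
        rw [sum_pow_card_mul_one_sub_pow_mul_card_filter, Real.sqrt_mul hp0]

end BiasedSubsets

section RandomRestriction

variable {n d : ℕ}

theorem embedPt_involutive (S : Finset (Fin d)) :
    Function.Involutive fun zx : Grid n d × Grid n d =>
      (embedPt S zx.2 zx.1, embedPt S zx.1 zx.2) := by
  rintro ⟨z, x⟩
  ext j <;> by_cases hj : j ∈ S <;> simp [embedPt, hj]

theorem sum_sum_embedPt {M : Type*} [AddCommMonoid M] (S : Finset (Fin d)) (g : Grid n d → M) :
    ∑ z : Grid n d, ∑ x : Grid n d, g (embedPt S z x) = ∑ _z : Grid n d, ∑ x : Grid n d, g x := by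
  rw [← Fintype.sum_prod_type', ← Fintype.sum_prod_type']
  exact Fintype.sum_bijective _ (embedPt_involutive S).bijective _ _ fun _ => rfl

theorem sum_div_sum_embedPt_div (S : Finset (Fin d)) (g : Grid n d → ℝ) :
    (∑ z : Grid n d, (∑ x : Grid n d, g (embedPt S z x)) / (n : ℝ) ^ d) / (n : ℝ) ^ d =
      (∑ x : Grid n d, g x) / (n : ℝ) ^ d := by
  rw [← sum_div, sum_sum_embedPt, sum_const, card_univ, nsmul_eq_mul]
  simp only [Fintype.card_pi, prod_const, card_univ, Fintype.card_fin, Nat.cast_pow]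
  rcases eq_or_ne ((n : ℝ) ^ d) 0 with h | h
  · simp [h]
  · rw [mul_div_cancel_left₀ _ h]

theorem sum_pow_card_mul_one_sub_pow_mul_sqrt_thrInfCsub_le (f : Grid n d → Bool)
    (χ : Grid n d → Grid n d → Bool) {p : ℝ} (hp0 : 0 ≤ p) (hp1 : p ≤ 1) (w : Grid n d) :
    ∑ S : Finset (Fin d), p ^ #S * (1 - p) ^ (d - #S) * √(thrInfCsub f χ S w : ℝ) ≤
      √p * √(thrInfC f χ w : ℝ) := by
  have h := Fintype.sum_pow_card_mul_one_sub_pow_mul_sqrt_card_filter_le (ι := Fin d) hp0 hp1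
    fun i => ∃ y, (IsViol f i w y ∧ χ w y = f w) ∨ (IsViol f i y w ∧ χ y w = f w)
  rw [Fintype.card_fin] at h
  exact h

end RandomRestriction

/-- the Talagrand objective of `f` dominates `1/√p` times the expected
Talagrand objective of a random restriction, where `S ∼ H(p)` includes each coordinate
independently with probability `p`, the setting `z` of the coordinates outside `S` is
uniform, and the restrictions inherit the coloring `χ`. -/
theorem talagrand_restriction {n d : ℕ} (f : Grid n d → Bool)
    (χ : Grid n d → Grid n d → Bool) (p : ℝ) (hp0 : 0 < p) (hp1 : p < 1) :
    (∑ x : Grid n d, Real.sqrt (thrInfC f χ x)) / (n : ℝ) ^ d ≥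
      (1 / Real.sqrt p) *
        ∑ S : Finset (Fin d),
          p ^ S.card * (1 - p) ^ (d - S.card) *
            ((∑ z : Grid n d,
                (∑ x : Grid n d,
                  Real.sqrt (thrInfCsub f χ S (embedPt S z x))) / (n : ℝ) ^ d) /
              (n : ℝ) ^ d) := by
  have havg (S : Finset (Fin d)) := sum_div_sum_embedPt_div S fun w => √(thrInfCsub f χ S w : ℝ)
  simp only [havg]
  have hp : √p ≠ 0 := (Real.sqrt_pos.2 hp0).ne'
  calc 1 / √p * ∑ S : Finset (Fin d), p ^ #S * (1 - p) ^ (d - #S) *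
        ((∑ w : Grid n d, √(thrInfCsub f χ S w : ℝ)) / (n : ℝ) ^ d)
      = 1 / √p * (∑ w : Grid n d, ∑ S : Finset (Fin d),
          p ^ #S * (1 - p) ^ (d - #S) * √(thrInfCsub f χ S w : ℝ)) / (n : ℝ) ^ d := by
        rw [mul_div_assoc, sum_div]
        congr 1
        simp only [mul_sum, sum_div, mul_div_assoc]
        exact sum_comm
    _ ≤ 1 / √p * (∑ w : Grid n d, √p * √(thrInfC f χ w : ℝ)) / (n : ℝ) ^ d := by
        gcongr with w
        exact sum_pow_card_mul_one_sub_pow_mul_sqrt_thrInfCsub_le f χ hp0.le hp1.le w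
    _ = (∑ x : Grid n d, √(thrInfC f χ x : ℝ)) / (n : ℝ) ^ d := by
        rw [← mul_sum, ← mul_assoc, one_div_mul_cancel hp, one_mul]
end
end

section
/- Let n ≥ 2 and f : [n]^d → {0,1}. Sample, independently in each dimension i ∈ [d], a uniformly random pair a_i < b_i from [n], and let H = ∏_{i=1}^d {a_i, b_i} be the resulting d-dimensional combinatorial hypercube. Then E_H[ I_{f|_H} ] = I_f / (n−1) and E_H[ I⁻_{f|_H} ] = I⁻_f / (n−1). -/
open scoped Classical

noncomputable section

/-- Total influence of `f : [n]^d → {0,1}`. -/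
def totInf {n d : ℕ} (f : Grid n d → Bool) : ℝ :=
  (∑ x : Grid n d, ∑ i : Fin d, ∑ c : Fin n,
    if f x ≠ f (Function.update x i c) then (1 : ℝ) else 0) / (n : ℝ) ^ d

/-- Total negative influence of `f : [n]^d → {0,1}`. -/
def totNegInf {n d : ℕ} (f : Grid n d → Bool) : ℝ :=
  (∑ x : Grid n d, ∑ i : Fin d, ∑ c : Fin n,
    if f x = true ∧ x i < c ∧ f (Function.update x i c) = false then (1 : ℝ) else 0) /
    (n : ℝ) ^ d

/-- The point of the sub-hypercube `∏ᵢ {aᵢ, bᵢ}` indexed by `ε ∈ {0,1}^d`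
(identifying `aᵢ` with `0` and `bᵢ` with `1`). -/
def cubePt {n d : ℕ} (a b : Fin d → Fin n) (ε : Fin d → Bool) : Grid n d :=
  fun i => if ε i then b i else a i

/-- Total influence of the restriction of `f` to the sub-hypercube `∏ᵢ {aᵢ, bᵢ}`. -/
def cubeInf {n d : ℕ} (f : Grid n d → Bool) (a b : Fin d → Fin n) : ℝ :=
  (∑ ε : Fin d → Bool, ∑ i : Fin d,
    if f (cubePt a b ε) ≠ f (cubePt a b (Function.update ε i (!ε i))) then (1 : ℝ) else 0) /
    2 ^ d

/-- Total negative influence of the restriction of `f` to `∏ᵢ {aᵢ, bᵢ}`. -/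
def cubeNegInf {n d : ℕ} (f : Grid n d → Bool) (a b : Fin d → Fin n) : ℝ :=
  (∑ ε : Fin d → Bool, ∑ i : Fin d,
    if f (cubePt a b ε) = true ∧ ε i = false ∧
        f (cubePt a b (Function.update ε i true)) = false then (1 : ℝ) else 0) / 2 ^ d

/-! A sampled cube `(a, b)` with a corner `ε` is the same as the ordered pair of opposite corners
`x = cubePt a b ε`, `y = cubePt a b (¬ε)`, and these pairs are exactly the pairs of grid points
differing in every coordinate. The cube edge at `x` in direction `i` is the grid edge from `x` to
`x` with `xᵢ` replaced by `yᵢ`; for fixed `x` and `c ≠ xᵢ`, exactly `(n - 1)^(d - 1)` of the `y`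
have `yᵢ = c`. So the cubes together count every grid edge `(n - 1)^(d - 1)` times, and comparing
the normalizations `2^d · C(n, 2)^d = n^d (n - 1)^d` with `n^d` gives the factor `1 / (n - 1)`. -/

open Finset Function

theorem Fintype.sum_piFinset_comp_apply {ι κ M : Type*} [DecidableEq ι] [Fintype ι]
    [DecidableEq κ] [AddCommMonoid M] (s : ι → Finset κ) (i : ι) (h : κ → M) :
    ∑ y ∈ Fintype.piFinset s, h (y i) = (∏ j ∈ univ.erase i, #(s j)) • ∑ c ∈ s i, h c := by
  rw [← sum_fiberwise_of_maps_to' (t := s i) (fun y hy => Fintype.mem_piFinset.1 hy i), smul_sum]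
  refine Finset.sum_congr rfl fun c hc => ?_
  rw [sum_const, Fintype.card_filter_piFinset_eq_of_mem s i hc]

section

variable {n d : ℕ}

theorem cubePt_update (a b : Fin d → Fin n) (ε ε' : Fin d → Bool) (i : Fin d) :
    cubePt a b (update ε i (ε' i)) = update (cubePt a b ε) i (cubePt a b ε' i) := by
  funext j
  by_cases hj : j = i
  · subst hj; simp [cubePt]
  · simp [cubePt, hj]

variable (n d) in
def cubePairs : Finset (Grid n d × Grid n d) :=
  univ.filter fun ab => ∀ i, ab.1 i < ab.2 i

theorem sum_cubePairs_sum_corners {M : Type*} [AddCommMonoid M] (g : Grid n d → Grid n d → M) :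
    ∑ ab ∈ cubePairs n d, ∑ ε : Fin d → Bool,
        g (cubePt ab.1 ab.2 ε) (cubePt ab.1 ab.2 fun j => !ε j) =
      ∑ x : Grid n d, ∑ y ∈ Fintype.piFinset fun j => univ.erase (x j), g x y := by
  rw [← sum_product', ← sum_finset_product' (univ.filter fun xy : Grid n d × Grid n d =>
      ∀ j, xy.2 j ≠ xy.1 j) _ _ (by simp)]
  refine sum_nbij' (fun q => (cubePt q.1.1 q.1.2 q.2, cubePt q.1.1 q.1.2 fun j => !q.2 j))
    (fun p => ((fun j => min (p.1 j) (p.2 j), fun j => max (p.1 j) (p.2 j)),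
      fun j => decide (p.2 j < p.1 j))) ?_ ?_ ?_ ?_ fun _ _ => rfl
  · rintro ⟨⟨a, b⟩, ε⟩ hq
    simp only [cubePairs, mem_product, mem_filter, mem_univ, true_and, and_true] at hq
    simp only [mem_filter, mem_univ, true_and]
    intro j
    cases h : ε j <;> simp [cubePt, h, (hq j).ne, (hq j).ne']
  · rintro ⟨x, y⟩ hp
    simp only [mem_filter, mem_univ, true_and] at hp
    simpa [cubePairs] using hp
  · rintro ⟨⟨a, b⟩, ε⟩ hq
    simp only [cubePairs, mem_product, mem_filter, mem_univ, true_and, and_true] at hq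
    ext j
    all_goals cases h : ε j <;> simp [cubePt, h, (hq j).le, hq j]
  · rintro ⟨x, y⟩ -
    ext j
    all_goals by_cases h : y j < x j <;> simp [cubePt, h, le_of_lt, not_lt.1]

def cubeEdgeSum (w : Grid n d → Fin d → Fin n → ℝ) (a b : Fin d → Fin n) : ℝ :=
  ∑ ε : Fin d → Bool, ∑ i, w (cubePt a b ε) i (cubePt a b (fun j => !ε j) i)

def gridEdgeSum (w : Grid n d → Fin d → Fin n → ℝ) : ℝ :=
  ∑ x : Grid n d, ∑ i, ∑ c, w x i c

theorem sum_cubeEdgeSum {w : Grid n d → Fin d → Fin n → ℝ}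
    (hw : ∀ x i, w x i (x i) = 0) :
    ((n : ℝ) - 1) * ∑ ab ∈ cubePairs n d, cubeEdgeSum w ab.1 ab.2 =
      ((n : ℝ) - 1) ^ d * gridEdgeSum w := by
  have hline : ∀ x i, ∑ y ∈ Fintype.piFinset (fun j => univ.erase (x j)), w x i (y i) =
      ((n : ℝ) - 1) ^ (d - 1) * ∑ c, w x i c := by
    intro x i
    rw [Fintype.sum_piFinset_comp_apply, sum_erase _ (hw x i), nsmul_eq_mul]
    simp [card_erase_of_mem, Nat.cast_sub (x i).pos]
  simp only [cubeEdgeSum, gridEdgeSum]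
  rw [sum_cubePairs_sum_corners fun x y => ∑ i, w x i (y i), mul_sum, mul_sum]
  refine Finset.sum_congr rfl fun x _ => ?_
  rw [Finset.sum_comm, mul_sum, mul_sum]
  refine Finset.sum_congr rfl fun i _ => ?_
  rw [hline, ← mul_assoc, ← pow_succ', Nat.sub_add_cancel i.pos]

theorem average_cubeEdgeSum (hn : 2 ≤ n) {w : Grid n d → Fin d → Fin n → ℝ}
    (hw : ∀ x i, w x i (x i) = 0) :
    (∑ ab ∈ cubePairs n d, cubeEdgeSum w ab.1 ab.2 / 2 ^ d) / (n.choose 2 : ℝ) ^ d =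
      gridEdgeSum w / (n : ℝ) ^ d / ((n : ℝ) - 1) := by
  have hn' : (2 : ℝ) ≤ n := by exact_mod_cast hn
  have hn0 : (n : ℝ) ≠ 0 := by linarith
  have hn1 : (n : ℝ) - 1 ≠ 0 := by linarith
  have hsum := sum_cubeEdgeSum hw
  rw [← sum_div, Nat.cast_choose_two, div_pow, mul_pow]
  field_simp
  linear_combination hsum

def infWeight (f : Grid n d → Bool) (x : Grid n d) (i : Fin d) (c : Fin n) : ℝ :=
  if f x ≠ f (update x i c) then 1 else 0

def negInfWeight (f : Grid n d → Bool) (x : Grid n d) (i : Fin d) (c : Fin n) : ℝ :=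
  if f x = true ∧ x i < c ∧ f (update x i c) = false then 1 else 0

theorem cubeInf_eq (f : Grid n d → Bool) (a b : Fin d → Fin n) :
    cubeInf f a b = cubeEdgeSum (infWeight f) a b / 2 ^ d := by
  simp only [cubeInf, cubeEdgeSum, infWeight, ← cubePt_update]

theorem cubeNegInf_eq (f : Grid n d → Bool) {a b : Fin d → Fin n} (hab : ∀ i, a i < b i) :
    cubeNegInf f a b = cubeEdgeSum (negInfWeight f) a b / 2 ^ d := by
  simp only [cubeNegInf, cubeEdgeSum, negInfWeight, ← cubePt_update]
  -- as `a < b`, the edge leaving corner `ε` in direction `i` goes up iff `ε i = false`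
  congr! 4 with ε - i -
  cases h : ε i <;> simp [cubePt, h, hab i, (hab i).le]

end

/-- sampling a uniform pair `aᵢ < bᵢ` in each dimension, the expected
(negative) influence of the restriction of `f` to the sampled sub-hypercube equals the
(negative) total influence of `f` divided by `n − 1`. -/
theorem expected_hypercube_influence {n d : ℕ} (hn : 2 ≤ n) (f : Grid n d → Bool) :
    (∑ ab ∈ Finset.univ.filter
        (fun ab : (Fin d → Fin n) × (Fin d → Fin n) => ∀ i, ab.1 i < ab.2 i),
        cubeInf f ab.1 ab.2) / ((n.choose 2 : ℝ)) ^ d = totInf f / ((n : ℝ) - 1) ∧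
    (∑ ab ∈ Finset.univ.filter
        (fun ab : (Fin d → Fin n) × (Fin d → Fin n) => ∀ i, ab.1 i < ab.2 i),
        cubeNegInf f ab.1 ab.2) / ((n.choose 2 : ℝ)) ^ d = totNegInf f / ((n : ℝ) - 1) := by
  constructor
  · rw [Finset.sum_congr rfl fun ab _ => cubeInf_eq f ab.1 ab.2]
    exact average_cubeEdgeSum hn fun x i => by simp [infWeight]
  · rw [Finset.sum_congr rfl fun ab hab => cubeNegInf_eq f (mem_filter.1 hab).2]
    exact average_cubeEdgeSum hn fun x i => by simp [negInfWeight]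
end
end

section
/- Let n ≥ 2 and f : [n]^d → {0,1}. If the total influence satisfies I_f > 9(n−1)√d, then the total negative influence satisfies I⁻_f > (n−1)√d. -/
open scoped Classical

noncomputable section

/-! Let `P_i` and `N_i` count the pairs `x, x'` differing only in coordinate `i`, with
`x_i < x'_i`, on which `f` increases, respectively decreases. Then `n^d I_f = 2 Σ (P_i + N_i)`
and `n^d I⁻_f = Σ N_i`, while `P_i - N_i = Σ_x f(x) (2 x_i - (n - 1))` is the correlation of `f`
with a centred function of `x_i`. These centred functions are orthogonal for distinct `i` and
bounded by `n - 1`, so Cauchy–Schwarz gives `Σ (P_i - N_i) ≤ (n - 1) √d n^d`; hence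
`4 Σ N_i = 2 Σ (P_i + N_i) - 2 Σ (P_i - N_i) > 7 (n - 1) √d n^d`. -/

open Finset Function

section CoordinateSums

variable {ι α : Type*} [Fintype ι] [DecidableEq ι] [Fintype α]

theorem sum_sum_update_comm {M : Type*} [AddCommMonoid M] (i : ι)
    (g : (ι → α) → (ι → α) → M) :
    ∑ x, ∑ c, g x (update x i c) = ∑ x, ∑ c, g (update x i c) x := by
  simp only [← Fintype.sum_prod_type']
  exact Fintype.sum_bijective (fun p => (update p.1 i p.2, p.1 i))
    (Involutive.bijective fun p => by simp) _ _ fun p => by simp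

theorem sum_mul_apply_eq_zero {φ ψ : α → ℝ} (hφ : ∑ a, φ a = 0) {i j : ι}
    (hji : j ≠ i) :
    ∑ x : ι → α, φ (x i) * ψ (x j) = 0 := by
  let g : α × ({k // k ≠ i} → α) → ℝ := fun p => φ p.1 * ψ (p.2 ⟨j, hji⟩)
  calc ∑ x : ι → α, φ (x i) * ψ (x j) = ∑ x, g (Equiv.funSplitAt i α x) := rfl
    _ = ∑ a, ∑ z, g (a, z) := (Equiv.sum_comp _ g).trans (Fintype.sum_prod_type g)
    _ = 0 := by simp only [g, ← mul_sum, ← sum_mul, hφ, zero_mul]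

theorem sum_sq_sum_apply {φ : α → ℝ} (hφ : ∑ a, φ a = 0) :
    ∑ x : ι → α, (∑ i, φ (x i)) ^ 2 = ∑ i, ∑ x : ι → α, φ (x i) ^ 2 := by
  simp_rw [sq, sum_mul_sum]
  rw [sum_comm]
  refine sum_congr rfl fun i _ => ?_
  rw [sum_comm, sum_eq_single i (fun j _ hji => sum_mul_apply_eq_zero hφ hji) (by simp)]

end CoordinateSums

section RankBalance

variable {α : Type*} [Fintype α] [LinearOrder α]

/-- On `Fin n` this is `2a - (n - 1)`. -/
def rankBalance (a : α) : ℝ := #{c | c < a} - #{c | a < c}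

theorem sum_rankBalance : ∑ a : α, rankBalance a = 0 := by
  simp only [rankBalance, sum_sub_distrib, sub_eq_zero, card_filter, Nat.cast_sum]
  exact sum_comm

theorem rankBalance_sq_le (a : α) : rankBalance a ^ 2 ≤ (Fintype.card α - 1 : ℝ) ^ 2 := by
  have hcard : #{c | c < a} + #{c | a < c} + 1 = Fintype.card α := by
    rw [← card_union_of_disjoint (disjoint_filter.2 fun c _ h h' => lt_asymm h h'),
      ← filter_or]
    simp only [lt_or_lt_iff_ne, filter_ne', card_erase_of_mem (mem_univ a), card_univ]
    have := Fintype.card_pos_iff.2 ⟨a⟩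
    omega
  have hcard' : (#{c | c < a} + #{c | a < c} + 1 : ℝ) = Fintype.card α := by
    exact_mod_cast hcard
  rw [rankBalance]
  nlinarith [(#{c | c < a}).cast_nonneg (α := ℝ), (#{c | a < c}).cast_nonneg (α := ℝ)]

end RankBalance

section EdgeCounts

variable {ι α : Type*} [Fintype ι] [DecidableEq ι] [Fintype α] [LinearOrder α]
  (f : (ι → α) → Bool) (i : ι)

def negEdgeCount : ℝ :=
  ∑ x, ∑ c, if f x = true ∧ x i < c ∧ f (update x i c) = false then 1 else 0

def posEdgeCount : ℝ :=
  ∑ x, ∑ c, if f x = false ∧ x i < c ∧ f (update x i c) = true then 1 else 0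

theorem sum_sum_ne_update_eq :
    ∑ x, ∑ c, (if f x ≠ f (update x i c) then 1 else 0 : ℝ)
      = 2 * (posEdgeCount f i + negEdgeCount f i) := by
  let g : (ι → α) → (ι → α) → ℝ := fun x y =>
    if x i < y i ∧ f x ≠ f y then 1 else 0
  have hsplit : ∀ x c, (if f x ≠ f (update x i c) then 1 else 0 : ℝ)
      = g x (update x i c) + g (update x i c) x := by
    intro x c
    rcases lt_trichotomy (x i) c with h | rfl | h
    · simp [g, h, h.not_gt, ne_comm]
    · simp [g]
    · simp [g, h, h.not_gt, ne_comm]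
  have hedge : ∀ x c, g x (update x i c)
      = (if f x = false ∧ x i < c ∧ f (update x i c) = true then 1 else 0)
        + (if f x = true ∧ x i < c ∧ f (update x i c) = false then 1 else 0) := by
    intro x c
    cases hx : f x <;> cases hy : f (update x i c) <;> simp [g, hx, hy]
  simp only [hsplit, sum_add_distrib, ← sum_sum_update_comm i g, hedge, posEdgeCount,
    negEdgeCount]
  ring

theorem posEdgeCount_sub_negEdgeCount :
    posEdgeCount f i - negEdgeCount f i
      = ∑ x, (if f x then 1 else 0) * rankBalance (x i) := by
  let F : (ι → α) → ℝ := fun x => if f x then 1 else 0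
  have hdiff : ∀ x c,
      (if f x = false ∧ x i < c ∧ f (update x i c) = true then 1 else 0 : ℝ)
        - (if f x = true ∧ x i < c ∧ f (update x i c) = false then 1 else 0)
      = (if x i < c then F (update x i c) else 0) - (if x i < c then F x else 0) := by
    intro x c
    by_cases h : x i < c <;> cases hx : f x <;> cases hy : f (update x i c) <;>
      simp [F, h, hx, hy]
  have hswap : ∑ x, ∑ c, (if x i < c then F (update x i c) else 0)
      = ∑ x, ∑ c, (if c < x i then F x else 0) := by
    simpa using sum_sum_update_comm i fun x y => if x i < y i then F y else 0
  have hbalance : ∀ x, F x * rankBalance (x i)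
      = ∑ c, (if c < x i then F x else 0) - ∑ c, (if x i < c then F x else 0) := by
    intro x
    simp only [rankBalance, ← sum_filter, sum_const, nsmul_eq_mul]
    ring
  change _ = ∑ x, F x * rankBalance (x i)
  simp only [posEdgeCount, negEdgeCount, ← sum_sub_distrib, hdiff]
  simp only [sum_sub_distrib, hswap, hbalance]

end EdgeCounts

theorem sum_posEdgeCount_sub_negEdgeCount_le {ι α : Type*} [Fintype ι] [DecidableEq ι]
    [Fintype α] [Nonempty α] [LinearOrder α] (f : (ι → α) → Bool) :
    ∑ i, (posEdgeCount f i - negEdgeCount f i)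
      ≤ Fintype.card (ι → α) * √(Fintype.card ι) * (Fintype.card α - 1) := by
  set N : ℝ := (Fintype.card (ι → α) : ℝ)
  set m : ℝ := (Fintype.card α : ℝ)
  let F : (ι → α) → ℝ := fun x => if f x then 1 else 0
  have hm : 1 ≤ m := Nat.one_le_cast.2 Fintype.card_pos
  have hF : ∑ x, F x ^ 2 ≤ N := by
    calc ∑ x, F x ^ 2 ≤ ∑ _x : ι → α, (1 : ℝ) :=
          sum_le_sum fun x _ => by by_cases hx : f x <;> simp [F, hx]
      _ = N := by simp [N]
  have hbalance : ∑ x : ι → α, (∑ i, rankBalance (x i)) ^ 2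
      ≤ Fintype.card ι * (N * (m - 1) ^ 2) := by
    rw [sum_sq_sum_apply sum_rankBalance]
    calc _ ≤ ∑ _i : ι, ∑ _x : ι → α, (m - 1) ^ 2 :=
          sum_le_sum fun _ _ => sum_le_sum fun x _ => rankBalance_sq_le _
      _ = _ := by simp [N]
  have hsum : ∑ i, (posEdgeCount f i - negEdgeCount f i)
      = ∑ x, F x * ∑ i, rankBalance (x i) := by
    simp only [posEdgeCount_sub_negEdgeCount, mul_sum]
    exact sum_comm
  have hsq : (∑ i, (posEdgeCount f i - negEdgeCount f i)) ^ 2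
      ≤ Fintype.card ι * (N * (m - 1)) ^ 2 := by
    rw [hsum]
    calc _ ≤ (∑ x, F x ^ 2) * ∑ x : ι → α, (∑ i, rankBalance (x i)) ^ 2 :=
          sum_mul_sq_le_sq_mul_sq _ _ _
      _ ≤ N * (Fintype.card ι * (N * (m - 1) ^ 2)) :=
          mul_le_mul hF hbalance (sum_nonneg fun _ _ => sq_nonneg _) (by positivity)
      _ = _ := by ring
  have hNm : 0 ≤ N * (m - 1) := mul_nonneg (Nat.cast_nonneg _) (by linarith)
  calc _ ≤ √(Fintype.card ι * (N * (m - 1)) ^ 2) :=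
        (le_abs_self _).trans (Real.abs_le_sqrt hsq)
    _ = N * √(Fintype.card ι) * (m - 1) := by
      rw [Real.sqrt_mul (by positivity), Real.sqrt_sq hNm]
      ring

/-- if the total influence exceeds `9(n−1)√d`, then the total negative
influence exceeds `(n−1)√d`. -/
theorem large_influence_implies_large_negative_influence {n d : ℕ} (hn : 2 ≤ n)
    (f : Grid n d → Bool)
    (h : totInf f > 9 * ((n : ℝ) - 1) * Real.sqrt d) :
    totNegInf f > ((n : ℝ) - 1) * Real.sqrt d := by
  have : NeZero n := ⟨by omega⟩
  have hn1 : (1 : ℝ) ≤ n := by exact_mod_cast (by omega : 1 ≤ n)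
  have hvol : (0 : ℝ) < n ^ d := by positivity
  have htot : totInf f = (2 * ∑ i, (posEdgeCount f i + negEdgeCount f i)) / n ^ d := by
    rw [totInf, sum_comm]
    simp only [sum_sum_ne_update_eq, mul_sum]
  have hneg : totNegInf f = (∑ i, negEdgeCount f i) / n ^ d := by
    rw [totNegInf, sum_comm]
    rfl
  have hbound := sum_posEdgeCount_sub_negEdgeCount_le f
  simp only [Fintype.card_fun, Fintype.card_fin, Nat.cast_pow, sum_sub_distrib] at hbound
  rw [htot, sum_add_distrib, gt_iff_lt, lt_div_iff₀ hvol] at h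
  rw [hneg, gt_iff_lt, lt_div_iff₀ hvol]
  have hR : 0 ≤ ((n : ℝ) - 1) * √d * n ^ d :=
    mul_nonneg (mul_nonneg (by linarith) (Real.sqrt_nonneg _)) hvol.le
  linarith
end
end
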